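/- Let ℓ : ℝ^{d×m} → ℝ be twice continuously differentiable, let λ ≠ 0 be a real number, and define the reparameterized loss ℓ'(V) := ℓ(λ⁻¹ V). Define the relative flatness measure of a loss g at W by κ_g(W) = Σ_{s,s'=1}^d ⟨W_s, W_{s'}⟩ · Σ_{t=1}^m ∂²g(W)/∂w_{s,t}∂w_{s',t}, where W_s is the s-th row of W. Then the relative flatness measure is invariant under this reparameterization: κ_{ℓ'}(λW) = κ_ℓ(W) for all W ∈ ℝ^{d×m}. -/

import Mathlib

/-! The chain rule for the linear map `V ↦ λ⁻¹ V` makes every second partial derivative of `ℓ'`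
at `λW` equal to `λ⁻²` times that of `ℓ` at `W`, while the Gram matrix `⟨W_s, W_{s'}⟩` of `λW`
is `λ²` times that of `W`; the two factors cancel in each term of `κ`. -/

open scoped BigOperators

/-- Second partial derivative of `f : ℝ^{d×m} → ℝ` with respect to the entries
`(s,t)` (outer) and `(s',t')` (inner) of the weight matrix. -/
noncomputable def pderiv2 {d m : ℕ} (f : (Fin d → Fin m → ℝ) → ℝ)
    (W : Fin d → Fin m → ℝ) (s : Fin d) (t : Fin m) (s' : Fin d) (t' : Fin m) : ℝ :=
  fderiv ℝ (fun V => fderiv ℝ f V (Pi.single s' (Pi.single t' 1))) W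
    (Pi.single s (Pi.single t 1))

/-- The relative flatness measure of a loss `g : ℝ^{d×m} → ℝ` at a weight matrix `W`:
`κ_g(W) = Σ_{s,s'} ⟨W_s, W_{s'}⟩ · Σ_t ∂²g(W)/∂w_{s,t}∂w_{s',t}`. -/
noncomputable def kappa {d m : ℕ} (g : (Fin d → Fin m → ℝ) → ℝ)
    (W : Fin d → Fin m → ℝ) : ℝ :=
  ∑ s, ∑ s', (∑ t, W s t * W s' t) * (∑ t, pderiv2 g W s t s' t)

theorem fderiv_fderiv_apply_comp_smul {𝕜 E F : Type*} [NontriviallyNormedField 𝕜]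
    [NormedAddCommGroup E] [NormedSpace 𝕜 E] [NormedAddCommGroup F] [NormedSpace 𝕜 F]
    (f : E → F) (c : 𝕜) (x u v : E) :
    fderiv 𝕜 (fun y => fderiv 𝕜 (fun z => f (c • z)) y v) x u
      = (c * c) • fderiv 𝕜 (fun y => fderiv 𝕜 f y v) (c • x) u := by
  have inner : (fun y => fderiv 𝕜 (fun z => f (c • z)) y v)
      = c • fun y => (fun w => fderiv 𝕜 f w v) (c • y) := by
    funext y
    rw [fderiv_comp_smul]
    rfl
  rw [inner, fderiv_const_smul_field, Pi.smul_apply,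
    fderiv_comp_smul (f := fun w => fderiv 𝕜 f w v)]
  simp only [FunLike.coe_smul, Pi.smul_apply, smul_smul]

theorem pderiv2_comp_smul {d m : ℕ} (f : (Fin d → Fin m → ℝ) → ℝ) (c : ℝ)
    (W : Fin d → Fin m → ℝ) (s : Fin d) (t : Fin m) (s' : Fin d) (t' : Fin m) :
    pderiv2 (fun V => f (c • V)) W s t s' t' = c * c * pderiv2 f (c • W) s t s' t' :=
  fderiv_fderiv_apply_comp_smul f c W _ _

theorem kappa_comp_smul {d m : ℕ} (g : (Fin d → Fin m → ℝ) → ℝ) (c : ℝ)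
    (W : Fin d → Fin m → ℝ) :
    kappa (fun V => g (c • V)) W = kappa g (c • W) := by
  have gram : ∀ s s', ∑ t, (c • W) s t * (c • W) s' t = c * c * ∑ t, W s t * W s' t := by
    intro s s'
    rw [Finset.mul_sum]
    exact Finset.sum_congr rfl fun t _ => by simp only [Pi.smul_apply, smul_eq_mul]; ring
  simp only [kappa, pderiv2_comp_smul, gram, ← Finset.mul_sum]
  exact Finset.sum_congr rfl fun s _ => Finset.sum_congr rfl fun s' _ => by ring

theorem statement8_general {d m : ℕ} (ℓ : (Fin d → Fin m → ℝ) → ℝ)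
    (lam : ℝ) (hlam : lam ≠ 0)
    (ℓ' : (Fin d → Fin m → ℝ) → ℝ) (hℓ' : ∀ V, ℓ' V = ℓ (lam⁻¹ • V)) :
    ∀ W : Fin d → Fin m → ℝ, kappa ℓ' (lam • W) = kappa ℓ W := by
  intro W
  rw [funext hℓ', kappa_comp_smul, inv_smul_smul₀ hlam]

/-- the relative flatness measure is invariant under the layer-wise
reparameterization `W ↦ λW`, `ℓ ↦ ℓ'` with `ℓ'(V) := ℓ(λ⁻¹ V)` for `λ ≠ 0`:
`κ_{ℓ'}(λW) = κ_ℓ(W)`. -/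
theorem statement8 {d m : ℕ} (ℓ : (Fin d → Fin m → ℝ) → ℝ)
    (hℓ : ContDiff ℝ 2 ℓ) (lam : ℝ) (hlam : lam ≠ 0)
    (ℓ' : (Fin d → Fin m → ℝ) → ℝ) (hℓ' : ∀ V, ℓ' V = ℓ (lam⁻¹ • V)) :
    ∀ W : Fin d → Fin m → ℝ, kappa ℓ' (lam • W) = kappa ℓ W :=
  statement8_general ℓ lam hlam ℓ' hℓ'
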